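/- Let (𝒟₁, π₁) and (𝒟₂, π₂) be closed representations of a unital *-algebra A on the same complex Hilbert space H. If cl(π₁(a)) = cl(π₂(a)) (equality of graphs of the closures) for every a ∈ A with a = a*, then the two representations are equal: 𝒟₁ = 𝒟₂ and π₁(a) = π₂(a) for all a ∈ A. (The set of symmetric elements is a strong generating set of A.) -/

import Mathlib

/-- A representation of a unital `⋆`-algebra `A` on a complex Hilbert space `H`:
a dense subspace `dom ⊆ H` together with a unital algebra homomorphism `π` from `A` into the
endomorphisms of `dom` satisfying `⟪π a ξ, η⟫ = ⟪ξ, π (star a) η⟫`. -/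
structure HilbertRep (A : Type*) [Ring A] [Algebra ℂ A] [StarRing A] [StarModule ℂ A]
    (H : Type*) [NormedAddCommGroup H] [InnerProductSpace ℂ H] where
  dom : Submodule ℂ H
  dense : Dense (dom : Set H)
  π : A → (dom →ₗ[ℂ] dom)
  π_one : π 1 = LinearMap.id
  π_mul : ∀ a b : A, π (a * b) = (π a).comp (π b)
  π_add : ∀ a b : A, π (a + b) = π a + π b
  π_smul : ∀ (c : ℂ) (a : A), π (c • a) = c • π a
  π_star : ∀ (a : A) (ξ η : dom),
    (inner ℂ ((π a ξ : dom) : H) (η : H) : ℂ) = inner ℂ (ξ : H) ((π (star a) η : dom) : H)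

variable {A : Type*} [Ring A] [Algebra ℂ A] [StarRing A] [StarModule ℂ A]
variable {H : Type*} [NormedAddCommGroup H] [InnerProductSpace ℂ H]

/-- The operator `π a` of a representation, as a partially defined (unbounded) linear
operator on `H`. -/
def HilbertRep.op (ρ : HilbertRep A H) (a : A) : H →ₗ.[ℂ] H :=
  ⟨ρ.dom, ρ.dom.subtype.comp (ρ.π a)⟩

/-- A representation is *closed* if its domain is the intersection of the domains of the
closures of all the operators `π a`. -/
def HilbertRep.IsClosedRep (ρ : HilbertRep A H) : Prop :=
  (ρ.dom : Set H) = ⋂ a : A, ((ρ.op a).closure.domain : Set H)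

/-!
For symmetric `c` the pairs `(ξ, π₁ c ξ)` lie in the closure of the graph of `π₂ c`, which gives
`⟪π₁ c ξ, η⟫ = ⟪ξ, π₂ c η⟫` for `ξ ∈ 𝒟₁`, `η ∈ 𝒟₂`; writing `a = s + i t` with `s, t`
symmetric turns this into `⟪π₁ a ξ, η⟫ = ⟪ξ, π₂ a* η⟫` for every `a`. Now fix `a` and `ξ ∈ 𝒟₁`. The symmetric element
`a*a` yields `ζₙ ∈ 𝒟₂` with `ζₙ → ξ` and `π₂(a*a) ζₙ → π₁(a*a) ξ`, and by the cross relation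
`‖π₂ a ζₙ - π₁ a ξ‖² = re ⟪ζₙ, π₂(a*a) ζₙ⟫ - 2 re ⟪ξ, π₂(a*a) ζₙ⟫ + re ⟪ξ, π₁(a*a) ξ⟫ → 0`.
So `π₁ a ⊆ cl (π₂ a)` for all `a`; closedness of `ρ₂` gives `𝒟₁ ⊆ 𝒟₂`, and by symmetry the two
representations coincide.
-/

open Filter Topology
open scoped InnerProductSpace

namespace LinearPMap

variable {R E F : Type*} [AddCommGroup E] [AddCommGroup F] [TopologicalSpace E]
  [TopologicalSpace F]

theorem mem_closure_graph_iff_exists_seq [Ring R] [Module R E] [Module R F]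
    [FrechetUrysohnSpace (E × F)] {f : E →ₗ.[R] F} {x : E} {y : F} :
    (x, y) ∈ _root_.closure (f.graph : Set (E × F)) ↔ ∃ u : ℕ → f.domain,
      Tendsto (fun n => (u n : E)) atTop (𝓝 x) ∧ Tendsto (fun n => f (u n)) atTop (𝓝 y) := by
  rw [mem_closure_iff_seq_limit]
  constructor
  · rintro ⟨p, hp, hlim⟩
    choose u hu using fun n => f.mem_graph_iff.1 (hp n)
    refine ⟨u, ?_, ?_⟩
    · simpa only [(hu _).1] using hlim.fst_nhds
    · simpa only [(hu _).2] using hlim.snd_nhds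
  · rintro ⟨u, hx, hy⟩
    exact ⟨fun n => ((u n : E), f (u n)), fun n => f.mem_graph (u n), hx.prodMk_nhds hy⟩

theorem graph_le_topologicalClosure_graph_of_closure_eq [CommRing R] [Module R E] [Module R F]
    [ContinuousAdd E] [ContinuousAdd F] [TopologicalSpace R] [ContinuousSMul R E]
    [ContinuousSMul R F] {f g : E →ₗ.[R] F} (hg : g.IsClosable) (hfg : f.closure = g.closure) :
    f.graph ≤ g.graph.topologicalClosure := by
  rw [hg.graph_closure_eq_closure_graph, ← hfg]
  exact le_graph_of_le f.le_closure

end LinearPMap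

namespace HilbertRep

theorem π_star_mul_self_apply (ρ : HilbertRep A H) (a : A) (ξ : ρ.dom) :
    ρ.π (star a * a) ξ = ρ.π (star a) (ρ.π a ξ) := by
  rw [ρ.π_mul, LinearMap.comp_apply]

theorem inner_π_star_eq_of_mem_closure_graph (ρ : HilbertRep A H) (a : A) (η : ρ.dom)
    {p : H × H} (hp : p ∈ closure ((ρ.op a).graph : Set (H × H))) :
    ⟪(ρ.π (star a) η : H), p.1⟫_ℂ = ⟪(η : H), p.2⟫_ℂ := by
  have hclosed : IsClosed {q : H × H | ⟪(ρ.π (star a) η : H), q.1⟫_ℂ = ⟪(η : H), q.2⟫_ℂ} :=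
    isClosed_eq (by fun_prop) (by fun_prop)
  refine closure_minimal (fun q hq => ?_) hclosed hp
  obtain ⟨ξ, hξ, hπξ⟩ := (ρ.op a).mem_graph_iff.1 hq
  rw [Set.mem_ofPred_eq, ← hξ, ← hπξ]
  have := ρ.π_star (star a) η ξ
  rwa [star_star] at this

theorem isClosable_op (ρ : HilbertRep A H) (a : A) : (ρ.op a).IsClosable := by
  refine ⟨(ρ.op a).graph.topologicalClosure.toLinearPMap,
    (Submodule.toLinearPMap_graph_eq _ ?_).symm⟩
  rintro ⟨_, y⟩ hy rfl
  have hperp : ∀ η : ρ.dom, ⟪(η : H), y⟫_ℂ = 0 := fun η => by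
    simpa using (ρ.inner_π_star_eq_of_mem_closure_graph a η hy).symm
  have : (fun z : H => ⟪z, y⟫_ℂ) = fun _ => 0 :=
    Continuous.ext_on ρ.dense (by fun_prop) continuous_const fun z hz => hperp ⟨z, hz⟩
  exact inner_self_eq_zero.1 (congrFun this y)

theorem norm_π_apply_sq (ρ : HilbertRep A H) (a : A) (ξ : ρ.dom) :
    ‖(ρ.π a ξ : H)‖ ^ 2 = (⟪(ξ : H), ρ.π (star a * a) ξ⟫_ℂ).re := by
  rw [norm_sq_eq_re_inner (𝕜 := ℂ), RCLike.re_to_complex, ρ.π_star, π_star_mul_self_apply]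

variable {ρ₁ ρ₂ : HilbertRep A H}

theorem mem_closure_graph_of_closure_eq {a : A} (h : (ρ₁.op a).closure = (ρ₂.op a).closure)
    (ξ : ρ₁.dom) : ((ξ : H), (ρ₁.π a ξ : H)) ∈ closure ((ρ₂.op a).graph : Set (H × H)) := by
  rw [← Submodule.topologicalClosure_coe]
  exact LinearPMap.graph_le_topologicalClosure_graph_of_closure_eq (ρ₂.isClosable_op a) h
    ((ρ₁.op a).mem_graph ξ)

theorem inner_π_eq_of_closure_eq {a : A} (ha : star a = a)
    (h : (ρ₁.op a).closure = (ρ₂.op a).closure) (ξ : ρ₁.dom) (η : ρ₂.dom) :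
    ⟪(ρ₁.π a ξ : H), η⟫_ℂ = ⟪(ξ : H), ρ₂.π a η⟫_ℂ := by
  have := ρ₂.inner_π_star_eq_of_mem_closure_graph a η (mem_closure_graph_of_closure_eq h ξ)
  rw [ha] at this
  rw [← inner_conj_symm, ← this, inner_conj_symm]

theorem inner_π_eq_inner_π_star
    (h : ∀ a : A, star a = a → (ρ₁.op a).closure = (ρ₂.op a).closure)
    (a : A) (ξ : ρ₁.dom) (η : ρ₂.dom) :
    ⟪(ρ₁.π a ξ : H), η⟫_ℂ = ⟪(ξ : H), ρ₂.π (star a) η⟫_ℂ := by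
  have hsa : ∀ b : selfAdjoint A, ⟪(ρ₁.π b ξ : H), η⟫_ℂ = ⟪(ξ : H), ρ₂.π b η⟫_ℂ :=
    fun b => inner_π_eq_of_closure_eq b.2.star_eq (h b b.2.star_eq) ξ η
  rw [← realPart_add_I_smul_imaginaryPart a, star_add, star_smul, (realPart a).2.star_eq,
    (imaginaryPart a).2.star_eq, Complex.star_def, Complex.conj_I]
  simp only [ρ₁.π_add, ρ₁.π_smul, ρ₂.π_add, ρ₂.π_smul, LinearMap.add_apply,
    LinearMap.smul_apply, Submodule.coe_add, Submodule.coe_smul, inner_add_left,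
    inner_add_right, inner_smul_left, inner_smul_right, hsa, Complex.conj_I]

theorem norm_π_sub_π_sq (h : ∀ a : A, star a = a → (ρ₁.op a).closure = (ρ₂.op a).closure)
    (a : A) (ξ : ρ₁.dom) (ζ : ρ₂.dom) :
    ‖(ρ₂.π a ζ : H) - ρ₁.π a ξ‖ ^ 2 = (⟪(ζ : H), ρ₂.π (star a * a) ζ⟫_ℂ).re
      - 2 * (⟪(ξ : H), ρ₂.π (star a * a) ζ⟫_ℂ).re + (⟪(ξ : H), ρ₁.π (star a * a) ξ⟫_ℂ).re := by
  rw [norm_sub_sq (𝕜 := ℂ), norm_π_apply_sq, norm_π_apply_sq, inner_re_symm, RCLike.re_to_complex,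
    inner_π_eq_inner_π_star h, π_star_mul_self_apply]

theorem tendsto_π_of_tendsto_π_star_mul
    (h : ∀ a : A, star a = a → (ρ₁.op a).closure = (ρ₂.op a).closure) (a : A) (ξ : ρ₁.dom)
    {ζ : ℕ → ρ₂.dom} (hζ : Tendsto (fun n => (ζ n : H)) atTop (𝓝 ξ))
    (hπζ : Tendsto (fun n => (ρ₂.π (star a * a) (ζ n) : H)) atTop
      (𝓝 (ρ₁.π (star a * a) ξ))) :
    Tendsto (fun n => (ρ₂.π a (ζ n) : H)) atTop (𝓝 (ρ₁.π a ξ)) := by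
  set v : H := (ρ₁.π (star a * a) ξ : H)
  have hsq : Tendsto (fun n => ‖(ρ₂.π a (ζ n) : H) - ρ₁.π a ξ‖ ^ 2) atTop (𝓝 0) := by
    have hcont : Continuous fun p : H × H =>
        (⟪p.1, p.2⟫_ℂ).re - 2 * (⟪(ξ : H), p.2⟫_ℂ).re + (⟪(ξ : H), v⟫_ℂ).re := by fun_prop
    convert (hcont.tendsto ((ξ : H), v)).comp (hζ.prodMk_nhds hπζ) using 2 with n
    · exact norm_π_sub_π_sq h a ξ (ζ n)
    · dsimp only
      ring
  rw [tendsto_iff_norm_sub_tendsto_zero]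
  simpa [Real.sqrt_sq (norm_nonneg _)] using hsq.sqrt

theorem op_le_closure_op (h : ∀ a : A, star a = a → (ρ₁.op a).closure = (ρ₂.op a).closure)
    (a : A) : ρ₁.op a ≤ (ρ₂.op a).closure := by
  refine LinearPMap.le_of_le_graph ?_
  rintro ⟨_, _⟩ hp
  obtain ⟨ξ, rfl, rfl⟩ := (ρ₁.op a).mem_graph_iff.1 hp
  rw [← (ρ₂.isClosable_op a).graph_closure_eq_closure_graph, ← SetLike.mem_coe,
    Submodule.topologicalClosure_coe]
  obtain ⟨ζ, hζ, hπζ⟩ := LinearPMap.mem_closure_graph_iff_exists_seq.1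
    (mem_closure_graph_of_closure_eq (h _ (IsSelfAdjoint.star_mul_self a).star_eq) ξ)
  exact LinearPMap.mem_closure_graph_iff_exists_seq.2
    ⟨ζ, hζ, tendsto_π_of_tendsto_π_star_mul h a ξ hζ hπζ⟩

theorem dom_le_of_closure_eq (h : ∀ a : A, star a = a → (ρ₁.op a).closure = (ρ₂.op a).closure)
    (h₂ : ρ₂.IsClosedRep) : ρ₁.dom ≤ ρ₂.dom := fun ξ hξ => by
  rw [← SetLike.mem_coe, h₂]
  exact Set.mem_iInter.2 fun a => (op_le_closure_op h a).1 hξ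

end HilbertRep

theorem eq_of_closures_eq_on_symmetric (ρ₁ ρ₂ : HilbertRep A H)
    (h₁ : ρ₁.IsClosedRep) (h₂ : ρ₂.IsClosedRep)
    (h : ∀ a : A, star a = a → (ρ₁.op a).closure = (ρ₂.op a).closure) :
    ρ₁.dom = ρ₂.dom ∧ ∀ a : A, ρ₁.op a = ρ₂.op a := by
  have hdom : ρ₁.dom = ρ₂.dom := le_antisymm (HilbertRep.dom_le_of_closure_eq h h₂)
    (HilbertRep.dom_le_of_closure_eq (fun a ha => (h a ha).symm) h₁)
  refine ⟨hdom, fun a => LinearPMap.ext hdom fun x hx₁ hx₂ => ?_⟩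
  exact (ρ₂.op a).closure.mem_graph_snd_inj
    (LinearPMap.le_graph_of_le (HilbertRep.op_le_closure_op h a) ((ρ₁.op a).mem_graph ⟨x, hx₁⟩))
    (LinearPMap.le_graph_of_le (ρ₂.op a).le_closure ((ρ₂.op a).mem_graph ⟨x, hx₂⟩)) rfl
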